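/- arXiv:2303.03308 — 5 statements merged into one kernel-verified Lean document; each statement's English description precedes it below -/
import Mathlib

section
/- Let Ω be a compact connected abelian topological group, A: Ω → Ω a continuous group automorphism, b ∈ Ω an element of the path component of the identity, T = T_{A,b}: ω ↦ Aω + b, and μ a T-ergodic Borel probability measure on Ω. If g: X → ℝ/ℤ is a continuous map on the suspension X of (Ω,T) and β ∈ ℝ is the ν-a.e. rotation number of g, then there exists a continuous character χ: Ω → ℝ/ℤ with χ∘A = χ and π(β) = χ(b), i.e. β ∈ π^{-1}(χ(b)). -/
open MeasureTheory Filter Topology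

noncomputable section

/-- The identification relation of the suspension of `(Ω, T)`:
`(T^n ω, t) ∼ (ω, t + n)` for all `n : ℤ`. -/
def suspRel {Ω : Type*} (T : Equiv.Perm Ω) : Ω × ℝ → Ω × ℝ → Prop :=
  fun p q => ∃ n : ℤ, q.1 = (T ^ n) p.1 ∧ q.2 = p.2 - n

/-- The suspension `X = (Ω × ℝ)/∼` of `(Ω, T)`. -/
abbrev Susp {Ω : Type*} (T : Equiv.Perm Ω) := Quot (suspRel T)

/-- The suspension flow `τ^s [ω, t] = [ω, t + s]`. -/
def suspFlow {Ω : Type*} (T : Equiv.Perm Ω) (s : ℝ) : Susp T → Susp T :=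
  Quot.map (fun p => (p.1, p.2 + s))
    (fun p q hpq => by
      obtain ⟨n, h1, h2⟩ := hpq
      exact ⟨n, h1, by show q.2 + s = (p.2 + s) - n; rw [h2]; ring⟩)

/-- The suspension measure `ν`, i.e. the image of `μ ⊗ (Lebesgue on (0,1])` under
the quotient map, so that `∫ g dν = ∫_Ω ∫_0^1 g([ω,t]) dt dμ(ω)`. -/
def suspMeasure {Ω : Type*} [MeasurableSpace Ω] (T : Equiv.Perm Ω) (μ : Measure Ω) :
    Measure (Susp T) :=
  Measure.map (Quot.mk (suspRel T)) (μ.prod (volume.restrict (Set.Ioc (0:ℝ) 1)))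

/-- `β` is the ν-a.e. rotation number of `g : X → ℝ/ℤ`: for ν-a.e. `x`, every continuous
lift `g̃ : ℝ → ℝ` of `t ↦ g (τ^t x)` satisfies `g̃(t)/t → β` as `t → ∞`. -/
def IsRotNum {Ω : Type*} [MeasurableSpace Ω] (T : Equiv.Perm Ω) (μ : Measure Ω)
    (g : Susp T → AddCircle (1:ℝ)) (β : ℝ) : Prop :=
  ∀ᵐ x ∂(suspMeasure T μ), ∀ g' : ℝ → ℝ, Continuous g' →
    (∀ t : ℝ, ((g' t : ℝ) : AddCircle (1:ℝ)) = g (suspFlow T t x)) →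
    Tendsto (fun t => g' t / t) atTop (𝓝 β)

/-! Put `h ω = g [ω, 0]`. On a compact connected abelian group the additivity defect of a
continuous map to the circle lifts to a continuous real 2-cocycle, and averaging it against Haar
measure shows that `h` is a continuous character `χ` plus a constant plus a map with a continuous
real lift `s`. Homotopy lifting along the fibres of the suspension gives a continuous `f : Ω → ℝ`,
the increment of every lift of `g` over one unit of time, and `f` lifts `h ∘ T - h`. Hence
`f + s - s ∘ T` is a continuous real lift of the character `χ ∘ A - χ` plus the constant `χ b`.
Such a lift, minus its value at `0`, is additive by connectedness and bounded by compactness, hence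
zero; so `χ ∘ A = χ` and `f + s - s ∘ T` is a constant `c` with `π c = χ b`. The Birkhoff sums
of `f` along an orbit are then `n c + O(1)`, so the rotation number is `c`. -/

namespace RotationNumber

open Set Function

local notation "𝕋" => AddCircle (1:ℝ)

theorem isCoveringMap_coe : IsCoveringMap ((↑) : ℝ → 𝕋) := AddCircle.isCoveringMap_coe 1

section Lifts

variable {X : Type*} [TopologicalSpace X]

def HasRealLift (u : X → 𝕋) : Prop :=
  ∃ U : X → ℝ, Continuous U ∧ ∀ x, (U x : 𝕋) = u x

theorem eq_of_coe_eq [PreconnectedSpace X] {F₁ F₂ : X → ℝ} (h₁ : Continuous F₁)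
    (h₂ : Continuous F₂) (h : ∀ x, (F₁ x : 𝕋) = F₂ x) {x₀ : X} (h₀ : F₁ x₀ = F₂ x₀) :
    F₁ = F₂ :=
  isCoveringMap_coe.eq_of_comp_eq h₁ h₂ (funext h) x₀ h₀

theorem sub_eq_sub_of_coe_eq [PreconnectedSpace X] {F₁ F₂ : X → ℝ} (h₁ : Continuous F₁)
    (h₂ : Continuous F₂) (h : ∀ x, (F₁ x : 𝕋) = F₂ x) (x y : X) :
    F₁ x - F₂ x = F₁ y - F₂ y := by
  have hF := eq_of_coe_eq (F₂ := fun x => F₂ x + (F₁ y - F₂ y)) h₁ (h₂.add continuous_const)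
    (fun x => by rw [AddCircle.coe_add, AddCircle.coe_sub, h, h, sub_self, add_zero])
    (x₀ := y) (by ring)
  linarith [congr_fun hF x]

theorem exists_lift_abs_eq_norm {u : X → 𝕋} (hu : Continuous u) (hsmall : ∀ x, ‖u x‖ < 1 / 2) :
    ∃ U : X → ℝ, Continuous U ∧ ∀ x, (U x : 𝕋) = u x ∧ |U x| = ‖u x‖ := by
  have hhalf : ‖((-(1 / 2) : ℝ) : 𝕋)‖ = 1 / 2 := by
    rw [(AddCircle.norm_coe_eq_abs_iff 1 one_ne_zero).2 (by norm_num)]; norm_num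
  refine ⟨fun x => AddCircle.equivIco 1 (-(1 / 2)) (u x), ?_, fun x => ⟨?_, ?_⟩⟩
  · refine continuous_iff_continuousAt.2 fun x => continuousAt_subtype_val.comp
      ((AddCircle.continuousAt_equivIco 1 _ fun hx => ?_).comp hu.continuousAt)
    have := hsmall x
    rw [hx, hhalf] at this
    exact lt_irrefl _ this
  · exact (AddCircle.equivIco 1 (-(1 / 2))).symm_apply_apply (u x)
  · have hmem := (AddCircle.equivIco 1 (-(1 / 2)) (u x)).2
    conv_rhs => rw [← (AddCircle.equivIco 1 (-(1 / 2))).symm_apply_apply (u x)]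
    refine ((AddCircle.norm_coe_eq_abs_iff 1 one_ne_zero).2 ?_).symm
    rw [abs_le]
    constructor <;> linarith [hmem.1, hmem.2]

theorem hasRealLift_of_simplyConnectedSpace [SimplyConnectedSpace X]
    [LocallyPathConnectedSpace X] {u : X → 𝕋} (hu : Continuous u) : HasRealLift u := by
  obtain ⟨x₀⟩ : Nonempty X := inferInstance
  obtain ⟨e₀, he₀⟩ := QuotientAddGroup.mk_surjective (u x₀)
  obtain ⟨F, -, hF⟩ := (isCoveringMap_coe.existsUnique_continuousMap_lifts ⟨u, hu⟩ x₀ e₀ he₀).exists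
  exact ⟨F, F.continuous, congr_fun hF⟩

end Lifts

section Increment

variable {Z : Type*} [TopologicalSpace Z]

def IsLiftIncrement (G : Z × ℝ → 𝕋) (f : Z → ℝ) : Prop :=
  ∀ z (v : ℝ → ℝ), Continuous v → (∀ t, (v t : 𝕋) = G (z, t)) → v 1 - v 0 = f z

theorem exists_continuous_isLiftIncrement {G : Z × ℝ → 𝕋} (hG : Continuous G) :
    ∃ f : Z → ℝ, Continuous f ∧ IsLiftIncrement G f := by
  let H : C(unitInterval × Z, 𝕋) :=
    ⟨fun p => G (p.2, p.1) - G (p.2, 0), by fun_prop⟩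
  have H₀ : ∀ z, H (0, z) = ((0 : C(Z, ℝ)) z : 𝕋) := fun z => by simp [H]
  obtain ⟨F, hFH, hF₀⟩ : ∃ F : C(unitInterval × Z, ℝ), (∀ p, (F p : 𝕋) = H p) ∧ ∀ z, F (0, z) = 0 :=
    ⟨_, congr_fun (isCoveringMap_coe.liftHomotopy_lifts H 0 H₀),
      isCoveringMap_coe.liftHomotopy_zero H 0 H₀⟩
  refine ⟨fun z => F (1, z), by fun_prop, fun z v hv hvG => ?_⟩
  have hvF := isCoveringMap_coe.eq_of_comp_eq (g₁ := fun t : unitInterval => v t - v 0)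
    (g₂ := fun t => F (t, z)) (by fun_prop) (by fun_prop)
    (funext fun t => by simp [hFH, H, hvG]) 0 (by simp [hF₀])
  simpa using congr_fun hvF 1

theorem IsLiftIncrement.coe_eq {G : Z × ℝ → 𝕋} (hG : Continuous G) {f : Z → ℝ}
    (hf : IsLiftIncrement G f) (z : Z) : (f z : 𝕋) = G (z, 1) - G (z, 0) := by
  obtain ⟨v, hv, hvG⟩ := hasRealLift_of_simplyConnectedSpace
    (hG.comp (continuous_const.prodMk continuous_id) : Continuous fun t : ℝ => G (z, t))
  rw [← hf z v hv hvG, AddCircle.coe_sub, hvG, hvG, comp_apply, comp_apply]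

end Increment

theorem _root_.AddMonoidHom.eq_zero_of_continuous_of_compactSpace {G : Type*} [TopologicalSpace G]
    [AddMonoid G] [CompactSpace G] (φ : G →+ ℝ) (hφ : Continuous φ) : φ = 0 := by
  obtain ⟨C, hC⟩ := isCompact_univ.exists_bound_of_continuousOn hφ.continuousOn
  ext x
  by_contra hx
  obtain ⟨n, hn⟩ := exists_nat_gt (C / |φ x|)
  have hCn := hC (n • x) trivial
  rw [map_nsmul, nsmul_eq_mul, norm_mul, Real.norm_natCast, Real.norm_eq_abs] at hCn
  rw [div_lt_iff₀ (abs_pos.2 hx)] at hn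
  linarith

theorem continuous_integral_of_continuous_uncurry {X Y : Type*} [TopologicalSpace X]
    [TopologicalSpace Y] [CompactSpace Y] [MeasurableSpace Y] [OpensMeasurableSpace Y]
    (η : Measure Y) [IsFiniteMeasure η] {F : X → Y → ℝ} (hF : Continuous (uncurry F)) :
    Continuous fun x => ∫ y, F x y ∂η := by
  have hint : ∀ x, Integrable (F x) η := fun x =>
    (hF.comp (continuous_const.prodMk continuous_id)).integrable_of_hasCompactSupport
      (HasCompactSupport.of_compactSpace _)
  refine continuous_iff_continuousAt.2 fun x₀ => Metric.tendsto_nhds.2 fun ε hε => ?_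
  set ε' := ε / (η.real univ + 1)
  have hε' : 0 < ε' := by positivity
  have hnear : ∀ᶠ x in 𝓝 x₀, ∀ y ∈ univ, |F x y - F x₀ y| < ε' :=
    isCompact_univ.eventually_forall_of_forall_eventually fun y _ =>
      (continuous_abs.comp (hF.sub (hF.comp (continuous_const.prodMk continuous_snd)))).continuousAt
        |>.eventually_lt continuousAt_const (by simpa using hε')
  filter_upwards [hnear] with x hx
  rw [dist_eq_norm, ← integral_sub (hint x) (hint x₀)]
  calc ‖∫ y, F x y - F x₀ y ∂η‖ ≤ ε' * η.real univ :=
        norm_integral_le_of_norm_le_const (ae_of_all _ fun y => (hx y trivial).le)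
    _ < ε' * (η.real univ + 1) := mul_lt_mul_of_pos_left (lt_add_one _) hε'
    _ = ε := div_mul_cancel₀ _ (by positivity)

section CompactGroup

variable {Ω : Type*} [TopologicalSpace Ω] [AddCommGroup Ω] [IsTopologicalAddGroup Ω]
  [CompactSpace Ω]

theorem eventually_forall_norm_sub_lt {h : Ω → 𝕋} (hh : Continuous h) {ε : ℝ} (hε : 0 < ε) :
    ∀ᶠ c in 𝓝 (0 : Ω), ∀ ω, ‖h (ω + c) - h ω‖ < ε := by
  have hc : Continuous fun p : Ω × Ω => ‖h (p.2 + p.1) - h p.2‖ := by fun_prop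
  simpa using isCompact_univ.eventually_forall_of_forall_eventually (x₀ := (0 : Ω))
    (P := fun c ω => ‖h (ω + c) - h ω‖ < ε) fun ω _ =>
      hc.continuousAt.eventually_lt continuousAt_const (by simpa using hε)

variable [ConnectedSpace Ω]

theorem hasRealLift_add_sub {h : Ω → 𝕋} (hh : Continuous h) (c : Ω) :
    HasRealLift fun ω => h (ω + c) - h ω := by
  let S : AddSubgroup Ω :=
    { carrier := {c | HasRealLift fun ω => h (ω + c) - h ω}
      zero_mem' := ⟨0, continuous_const, fun ω => by simp⟩
      add_mem' := by
        rintro c d ⟨U, hU, hUh⟩ ⟨V, hV, hVh⟩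
        refine ⟨fun ω => U ω + V (ω + c), by fun_prop, fun ω => ?_⟩
        simp only [AddCircle.coe_add, hUh, hVh, add_assoc]
        abel
      neg_mem' := by
        rintro c ⟨U, hU, hUh⟩
        refine ⟨fun ω => -U (ω + -c), by fun_prop, fun ω => ?_⟩
        simp only [AddCircle.coe_neg, hUh, neg_add_cancel_right]
        abel }
  have hS : (S : Set Ω) ∈ 𝓝 0 := by
    filter_upwards [eventually_forall_norm_sub_lt hh one_half_pos] with c hc
    obtain ⟨U, hU, hUh⟩ := exists_lift_abs_eq_norm (by fun_prop) hc
    exact ⟨U, hU, fun ω => (hUh ω).1⟩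
  have hSo := S.isOpen_of_mem_nhds hS
  have hSu : (S : Set Ω) = univ :=
    IsClopen.eq_univ ⟨S.isClosed_of_isOpen hSo, hSo⟩ ⟨0, S.zero_mem⟩
  exact (hSu ▸ mem_univ c : c ∈ (S : Set Ω))

theorem eq_zero_of_coe_eq_add_const (ψ : Ω →+ 𝕋) (κ : 𝕋) {W : Ω → ℝ} (hW : Continuous W)
    (hWψ : ∀ x, (W x : 𝕋) = ψ x + κ) : ψ = 0 ∧ ∀ x, W x = W 0 := by
  have hadd : ∀ x y, W (x + y) - W 0 = (W x - W 0) + (W y - W 0) := fun x y =>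
    congr_fun (eq_of_coe_eq (F₁ := fun p : Ω × Ω => W (p.1 + p.2) - W 0)
      (F₂ := fun p => (W p.1 - W 0) + (W p.2 - W 0)) (by fun_prop) (by fun_prop)
      (fun p => by simp only [AddCircle.coe_add, AddCircle.coe_sub, hWψ, map_add, map_zero]; abel)
      (x₀ := (0, 0)) (by simp)) (x, y)
  have hφ := AddMonoidHom.eq_zero_of_continuous_of_compactSpace
    (AddMonoidHom.mk' (fun x => W x - W 0) hadd) (hW.sub continuous_const)
  have hWc : ∀ x, W x = W 0 := fun x => sub_eq_zero.1 (DFunLike.congr_fun hφ x)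
  refine ⟨AddMonoidHom.ext fun x => ?_, hWc⟩
  have hx := hWψ x
  rw [hWc, hWψ 0, map_zero, zero_add] at hx
  simpa using hx.symm

section Defect

variable {h : Ω → 𝕋} (hh : Continuous h)

/-- The real lift of the additivity defect `h (x + y) - h x - h y + h 0`, normalized to vanish at
`x = 0`. Being the unique such lift, it is jointly continuous and a 2-cocycle. -/
def defectLift (x y : Ω) : ℝ :=
  (hasRealLift_add_sub hh y).choose x - (hasRealLift_add_sub hh y).choose 0

theorem defectLift_eq_sub {y : Ω} {L : Ω → ℝ} (hL : Continuous L)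
    (hLh : ∀ ω, (L ω : 𝕋) = h (ω + y) - h ω) (x : Ω) : defectLift hh x y = L x - L 0 := by
  obtain ⟨hc, hch⟩ := (hasRealLift_add_sub hh y).choose_spec
  have := sub_eq_sub_of_coe_eq hc hL (fun ω => by rw [hch, hLh]) x 0
  rw [defectLift]
  linarith

theorem coe_defectLift (x y : Ω) : (defectLift hh x y : 𝕋) = h (x + y) - h x - h y + h 0 := by
  obtain ⟨-, hch⟩ := (hasRealLift_add_sub hh y).choose_spec
  rw [defectLift, AddCircle.coe_sub, hch, hch]
  simp only [zero_add]
  abel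

theorem continuous_defectLift_left (y : Ω) : Continuous (defectLift hh · y) :=
  (hasRealLift_add_sub hh y).choose_spec.1.sub continuous_const

theorem defectLift_zero_left (y : Ω) : defectLift hh 0 y = 0 := sub_self _

theorem defectLift_zero_right (x : Ω) : defectLift hh x 0 = 0 := by
  simpa using defectLift_eq_sub hh (L := 0) continuous_const (fun ω => by simp) x

theorem defectLift_add_add (x y z : Ω) :
    defectLift hh x y + defectLift hh (x + y) z = defectLift hh x (y + z) + defectLift hh y z :=
  congr_fun (eq_of_coe_eq (F₁ := fun x => defectLift hh x y + defectLift hh (x + y) z)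
    (F₂ := fun x => defectLift hh x (y + z) + defectLift hh y z)
    ((continuous_defectLift_left hh y).add
      ((continuous_defectLift_left hh z).comp (continuous_add_const y)))
    ((continuous_defectLift_left hh (y + z)).add continuous_const)
    (fun x => by simp only [AddCircle.coe_add, coe_defectLift, add_assoc]; abel)
    (x₀ := 0) (by simp [defectLift_zero_left])) x

theorem eventually_forall_abs_defectLift_lt {ε : ℝ} (hε : 0 < ε) :
    ∀ᶠ e in 𝓝 0, ∀ x, |defectLift hh x e| < ε := by
  filter_upwards [eventually_forall_norm_sub_lt hh (lt_min (half_pos hε) one_half_pos)] with e he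
  obtain ⟨U, hU, hUh⟩ := exists_lift_abs_eq_norm (u := fun ω => h (ω + e) - h ω) (by fun_prop)
    fun ω => (he ω).trans_le (min_le_right _ _)
  intro x
  rw [defectLift_eq_sub hh hU (fun ω => (hUh ω).1) x]
  calc |U x - U 0| ≤ |U x| + |U 0| := abs_sub _ _
    _ < ε / 2 + ε / 2 := by
      rw [(hUh x).2, (hUh 0).2]
      exact add_lt_add ((he x).trans_le (min_le_left _ _)) ((he 0).trans_le (min_le_left _ _))
    _ = ε := add_halves ε

theorem continuous_defectLift : Continuous (uncurry (defectLift hh)) := by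
  have hzero : ∀ x₀, ContinuousAt (uncurry (defectLift hh)) (x₀, 0) := by
    intro x₀
    rw [ContinuousAt, uncurry_apply_pair, defectLift_zero_right, Metric.tendsto_nhds]
    intro ε hε
    filter_upwards [(continuous_snd.tendsto (x₀, (0 : Ω))).eventually
      (eventually_forall_abs_defectLift_lt hh hε)] with p hp
    simpa [Real.dist_eq, uncurry] using hp p.1
  -- the cocycle identity moves continuity at `(x, y₀)` to continuity at points `(x', 0)`
  have hsplit : ∀ y₀, uncurry (defectLift hh) = fun p => defectLift hh p.1 y₀ +
      uncurry (defectLift hh) (p.1 + y₀, p.2 - y₀) - uncurry (defectLift hh) (y₀, p.2 - y₀) := by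
    intro y₀
    funext ⟨x, y⟩
    have := defectLift_add_add hh x y₀ (y - y₀)
    rw [add_sub_cancel] at this
    simp only [uncurry_apply_pair]
    linarith
  refine continuous_iff_continuousAt.2 fun ⟨x₀, y₀⟩ => ?_
  rw [hsplit y₀]
  refine (((continuous_defectLift_left hh y₀).comp continuous_fst).continuousAt.add
    ((hzero (x₀ + y₀)).comp_of_eq (by fun_prop) (by simp))).sub
    ((hzero y₀).comp_of_eq (by fun_prop) (by simp))

theorem integral_defectLift_add [MeasurableSpace Ω] [BorelSpace Ω] (η : Measure Ω)
    [IsProbabilityMeasure η] [η.IsAddLeftInvariant] (x y : Ω) :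
    ∫ z, defectLift hh (x + y) z ∂η =
      ∫ z, defectLift hh x z ∂η + ∫ z, defectLift hh y z ∂η - defectLift hh x y := by
  have hint : ∀ F : Ω → ℝ, Continuous F → Integrable F η := fun F hF =>
    hF.integrable_of_hasCompactSupport (HasCompactSupport.of_compactSpace _)
  have hcocycle : ∀ z, defectLift hh (x + y) z =
      defectLift hh x (y + z) + defectLift hh y z - defectLift hh x y := fun z => by
    linarith [defectLift_add_add hh x y z]
  have hcont : ∀ x, Continuous (defectLift hh x) := fun x =>
    (continuous_defectLift hh).comp (continuous_const.prodMk continuous_id)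
  have hx : Integrable (fun z => defectLift hh x (y + z)) η :=
    hint _ ((hcont x).comp (continuous_const_add y))
  have hy : Integrable (fun z => defectLift hh y z) η := hint _ (hcont y)
  have hxy : Integrable (fun z => defectLift hh x (y + z) + defectLift hh y z) η := hx.add hy
  simp_rw [hcocycle]
  rw [integral_sub hxy (integrable_const _), integral_add hx hy,
    integral_add_left_eq_self (fun z => defectLift hh x z) y]
  simp

end Defect

theorem exists_eq_hom_add_const_add_coe {h : Ω → 𝕋} (hh : Continuous h) :
    ∃ χ : Ω →+ 𝕋, Continuous χ ∧ ∃ s : Ω → ℝ, Continuous s ∧ ∀ x, h x = χ x + h 0 + s x := by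
  borelize Ω
  let η : Measure Ω := Measure.addHaarMeasure ⊤
  have : IsProbabilityMeasure η :=
    ⟨by simpa [η] using
      Measure.addHaarMeasure_self (K₀ := (⊤ : TopologicalSpace.PositiveCompacts Ω))⟩
  -- `s (x + y) = s x + s y - defectLift hh x y`, so `π ∘ s` corrects the defect of `h`
  let s x := ∫ z, defectLift hh x z ∂η
  have hs : Continuous s := continuous_integral_of_continuous_uncurry η (continuous_defectLift hh)
  refine ⟨AddMonoidHom.mk' (fun x => h x - h 0 + s x) fun x y => ?_,
    (hh.sub continuous_const).add ((AddCircle.continuous_mk' 1).comp hs), fun x => -s x, hs.neg,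
    fun x => ?_⟩
  · simp only [s, integral_defectLift_add hh η x y, AddCircle.coe_add, AddCircle.coe_sub,
      coe_defectLift]
    abel
  · simp only [AddMonoidHom.mk'_apply, AddCircle.coe_neg]
    abel

theorem exists_cohomologous_const (A : Ω →+ Ω) (hA : Continuous A) (b : Ω) {h : Ω → 𝕋}
    (hh : Continuous h) {f : Ω → ℝ} (hf : Continuous f)
    (hfh : ∀ ω, (f ω : 𝕋) = h (A ω + b) - h ω) :
    ∃ χ : Ω →+ 𝕋, Continuous χ ∧ (∀ ω, χ (A ω) = χ ω) ∧ ∃ c : ℝ, (c : 𝕋) = χ b ∧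
      ∃ s : Ω → ℝ, Continuous s ∧ ∀ ω, f ω = c + s (A ω + b) - s ω := by
  obtain ⟨χ, hχ, s, hs, hhχs⟩ := exists_eq_hom_add_const_add_coe hh
  have hD : ∀ ω, ((f ω + s ω - s (A ω + b) : ℝ) : 𝕋) = (χ.comp A - χ) ω + χ b := fun ω => by
    simp only [AddCircle.coe_sub, AddCircle.coe_add, hfh, hhχs (A ω + b), hhχs ω,
      AddMonoidHom.sub_apply, AddMonoidHom.comp_apply, map_add]
    abel
  obtain ⟨hψ, hDc⟩ := eq_zero_of_coe_eq_add_const (χ.comp A - χ) (χ b)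
    (by fun_prop : Continuous fun ω => f ω + s ω - s (A ω + b)) hD
  refine ⟨χ, hχ, fun ω => sub_eq_zero.1 (DFunLike.congr_fun hψ ω), f 0 + s 0 - s (A 0 + b),
    by rw [hD, hψ, AddMonoidHom.zero_apply, zero_add], s, hs, fun ω => ?_⟩
  linarith [hDc ω]

end CompactGroup

theorem eq_of_tendsto_div_of_abs_sub_le {u : ℝ → ℝ} {t β c C : ℝ}
    (hβ : Tendsto (fun r => u (t + r) / r) atTop (𝓝 β)) (hC : ∀ n : ℕ, |u n - n * c| ≤ C) :
    β = c := by
  have hr : Tendsto (fun n : ℕ => (n : ℝ) - t) atTop atTop :=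
    tendsto_atTop_add_const_right _ _ tendsto_natCast_atTop_atTop
  have hlimβ : Tendsto (fun n : ℕ => u n / (n - t)) atTop (𝓝 β) :=
    (hβ.comp hr).congr fun n => by simp only [comp_apply, add_sub_cancel]
  have hbdd : IsBoundedUnder (· ≤ ·) atTop fun n : ℕ => ‖u n - n * c + t * c‖ :=
    isBoundedUnder_of ⟨C + |t * c|, fun n => (norm_add_le _ _).trans (add_le_add (hC n) le_rfl)⟩
  have herr := (tendsto_inv_atTop_zero.comp hr).zero_mul_isBoundedUnder_le hbdd
  have hlimc : Tendsto (fun n : ℕ => u n / (n - t)) atTop (𝓝 c) := by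
    have hsum : Tendsto (fun n : ℕ => c + (n - t)⁻¹ * (u n - n * c + t * c)) atTop (𝓝 c) := by
      simpa using herr.const_add c
    refine hsum.congr' ?_
    filter_upwards [hr.eventually_gt_atTop 0] with n hn
    field_simp
    ring
  exact tendsto_nhds_unique hlimβ hlimc

theorem suspMk_add_intCast {Ω : Type*} (T : Equiv.Perm Ω) (ω : Ω) (t : ℝ) (n : ℤ) :
    Quot.mk (suspRel T) (ω, t + n) = Quot.mk (suspRel T) ((T ^ n) ω, t) :=
  Quot.sound ⟨n, rfl, by ring⟩

theorem suspMeasure_ne_zero {Ω : Type*} [MeasurableSpace Ω] (T : Equiv.Perm Ω) (μ : Measure Ω)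
    [NeZero μ] : suspMeasure T μ ≠ 0 := by
  rw [suspMeasure, Measure.map_ne_zero_iff measurable_quot_mk.aemeasurable]
  intro h0
  have := Measure.prod_prod (μ := μ) (ν := volume.restrict (Ioc (0 : ℝ) 1)) univ univ
  rw [univ_prod_univ, h0] at this
  simp only [Measure.coe_zero, Pi.zero_apply, Measure.restrict_apply_univ, Real.volume_Ioc,
    sub_zero, ENNReal.ofReal_one, mul_one] at this
  exact NeZero.ne μ (Measure.measure_univ_eq_zero.1 this.symm)

theorem _root_.IsRotNum.eq_of_cohomologous {Ω : Type*} [TopologicalSpace Ω] [CompactSpace Ω]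
    [MeasurableSpace Ω] {T : Equiv.Perm Ω} {μ : Measure Ω} [NeZero μ] {g : Susp T → 𝕋}
    (hg : Continuous g) {β : ℝ} (hβ : IsRotNum T μ g β) {f s : Ω → ℝ}
    (hf : IsLiftIncrement (fun p => g (Quot.mk _ p)) f) (hs : Continuous s) {c : ℝ}
    (hfs : ∀ ω, f ω = c + s (T ω) - s ω) : β = c := by
  have : (ae (suspMeasure T μ)).NeBot := ae_neBot.2 (suspMeasure_ne_zero T μ)
  obtain ⟨x, hx⟩ := hβ.exists
  obtain ⟨⟨ω, t⟩, rfl⟩ := Quot.exists_rep x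
  obtain ⟨u, hu, hug⟩ := hasRealLift_of_simplyConnectedSpace
    (hg.comp (continuous_quot_mk.comp (continuous_const.prodMk continuous_id)) :
      Continuous fun r : ℝ => g (Quot.mk _ (ω, r)))
  have hlim := hx (fun r => u (t + r)) (by fun_prop) fun r => hug (t + r)
  have hstep : ∀ n : ℕ, u (n + 1) - u n = f ((T ^ n) ω) := fun n => by
    simpa using hf ((T ^ n) ω) (fun r => u (n + r)) (by fun_prop) fun r => by
      rw [hug, comp_apply, add_comm, ← Int.cast_natCast (R := ℝ), suspMk_add_intCast,
        zpow_natCast]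
  have hu : ∀ n : ℕ, u n = u 0 + n * c + s ((T ^ n) ω) - s ω := by
    intro n
    induction n with
    | zero => simp
    | succ n ih =>
      rw [Nat.cast_succ, ← sub_add_cancel (u (n + 1)) (u n), hstep, hfs, ih, pow_succ',
        Equiv.Perm.mul_apply]
      ring
  obtain ⟨C, hC⟩ := isCompact_univ.exists_bound_of_continuousOn hs.continuousOn
  refine eq_of_tendsto_div_of_abs_sub_le hlim (C := |u 0| + 2 * C) fun n => ?_
  rw [hu n]
  have h₁ := hC ((T ^ n) ω) trivial
  have h₂ := hC ω trivial
  rw [Real.norm_eq_abs] at h₁ h₂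
  calc |u 0 + n * c + s ((T ^ n) ω) - s ω - n * c| = |u 0 + s ((T ^ n) ω) - s ω| := by ring_nf
    _ ≤ |u 0| + |s ((T ^ n) ω)| + |s ω| := by
      linarith [abs_sub (u 0 + s ((T ^ n) ω)) (s ω), abs_add_le (u 0) (s ((T ^ n) ω))]
    _ ≤ |u 0| + 2 * C := by linarith

end RotationNumber

open RotationNumber

theorem stmt_0_general {Ω : Type*} [TopologicalSpace Ω] [AddCommGroup Ω] [IsTopologicalAddGroup Ω]
    [CompactSpace Ω] [ConnectedSpace Ω]
    [MeasurableSpace Ω]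
    (A : Ω ≃+ Ω) (hA : Continuous A)
    (b : Ω)
    (T : Equiv.Perm Ω) (hT : ∀ ω, T ω = A ω + b)
    (μ : Measure Ω) [IsProbabilityMeasure μ]
    (g : Susp T → AddCircle (1:ℝ)) (hg : Continuous g)
    (β : ℝ) (hβ : IsRotNum T μ g β) :
    ∃ χ : Ω →+ AddCircle (1:ℝ), Continuous χ ∧ (∀ ω, χ (A ω) = χ ω) ∧
      ((β : ℝ) : AddCircle (1:ℝ)) = χ b := by
  have hG : Continuous fun p : Ω × ℝ => g (Quot.mk _ p) := hg.comp continuous_quot_mk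
  obtain ⟨f, hf, hfg⟩ := exists_continuous_isLiftIncrement hG
  have hfh : ∀ ω, (f ω : AddCircle (1:ℝ)) =
      g (Quot.mk _ (A ω + b, 0)) - g (Quot.mk _ (ω, 0)) := fun ω => by
    have hone := suspMk_add_intCast T ω 0 1
    rw [zero_add, Int.cast_one, zpow_one] at hone
    rw [hfg.coe_eq hG, ← hT, hone]
  obtain ⟨χ, hχ, hχA, c, hc, s, hs, hfs⟩ := exists_cohomologous_const A.toAddMonoidHom hA b
    (hG.comp (continuous_id.prodMk continuous_const)) hf hfh
  refine ⟨χ, hχ, hχA, ?_⟩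
  rwa [hβ.eq_of_cohomologous hg hfg hs fun ω => by rw [hfs, hT]; rfl]

/-- every a.e. rotation number of a continuous map on the suspension of an ergodic
affine automorphism `T_{A,b}` (with `b` in the path component of the identity of a compact
connected abelian group) lies in `π⁻¹(χ b)` for some `A`-invariant character `χ`. -/
theorem stmt_0 {Ω : Type*} [TopologicalSpace Ω] [AddCommGroup Ω] [IsTopologicalAddGroup Ω]
    [CompactSpace Ω] [ConnectedSpace Ω] [T2Space Ω]
    [MeasurableSpace Ω] [BorelSpace Ω]
    (A : Ω ≃+ Ω) (hA : Continuous A) (hA' : Continuous A.symm)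
    (b : Ω) (hb : b ∈ pathComponent (0 : Ω))
    (T : Equiv.Perm Ω) (hT : ∀ ω, T ω = A ω + b)
    (μ : Measure Ω) [IsProbabilityMeasure μ] (hErg : Ergodic (T : Ω → Ω) μ)
    (g : Susp T → AddCircle (1:ℝ)) (hg : Continuous g)
    (β : ℝ) (hβ : IsRotNum T μ g β) :
    ∃ χ : Ω →+ AddCircle (1:ℝ), Continuous χ ∧ (∀ ω, χ (A ω) = χ ω) ∧
      ((β : ℝ) : AddCircle (1:ℝ)) = χ b :=
  stmt_0_general A hA b T hT μ g hg β hβ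

end
end

section
/- Let Ω be a compact connected abelian topological group, A: Ω → Ω a continuous group automorphism, b ∈ Ω, T = T_{A,b}: ω ↦ Aω + b, and μ a T-ergodic Borel probability measure on Ω. For every continuous character χ: Ω → ℝ/ℤ with χ∘A = χ and every β ∈ ℝ with π(β) = χ(b), there exists a continuous map g: X → ℝ/ℤ on the suspension X of (Ω,T) whose ν-a.e. rotation number is β; in particular one may take g([ω,t]) = χ(ω) + π(βt). -/
open MeasureTheory Filter Topology

noncomputable section

/-!
Since `χ ∘ T = χ + π(β)`, the function `(ω, t) ↦ χ(ω) + π(β t)` is invariant under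
`(T^n ω, t) ∼ (ω, t + n)` and descends to the suspension. Along any orbit it is
`t ↦ c + π(β t)`, so by uniqueness of lifts through the covering `ℝ → ℝ/ℤ` every continuous
lift is `t ↦ c̃ + β t`; hence the rotation number is `β` at every point, not merely a.e.
-/

theorem apply_zpow_apply_of_apply_eq_add {Ω G : Type*} [AddCommGroup G] (T : Equiv.Perm Ω)
    {f : Ω → G} {a : G} (hf : ∀ ω, f (T ω) = f ω + a) (n : ℤ) (ω : Ω) :
    f ((T ^ n) ω) = f ω + n • a := by
  induction n using Int.induction_on generalizing ω with
  | zero => simp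
  | succ k ih =>
    rw [zpow_add_one, Equiv.Perm.mul_apply, ih, hf, add_one_zsmul]
    abel
  | pred k ih =>
    have hinv : f (T⁻¹ ω) = f ω - a := eq_sub_of_add_eq (by simpa using (hf (T⁻¹ ω)).symm)
    rw [zpow_sub_one, Equiv.Perm.mul_apply, ih, hinv, sub_one_zsmul]
    abel

theorem eq_add_mul_of_coe_eq {β : ℝ} {g : ℝ → ℝ} (hg : Continuous g) (c : AddCircle (1:ℝ))
    (hgc : ∀ t, (g t : AddCircle (1:ℝ)) = c + ((β * t : ℝ) : AddCircle (1:ℝ))) (t : ℝ) :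
    g t = g 0 + β * t := by
  refine congrFun ((AddCircle.isCoveringMap_coe (1:ℝ)).eq_of_comp_eq hg
    (continuous_const.add (continuous_const.mul continuous_id)) (funext fun s => ?_) 0
    (by simp)) t
  simp [hgc]

theorem tendsto_add_mul_div_atTop (c β : ℝ) :
    Tendsto (fun t => (c + β * t) / t) atTop (𝓝 β) := by
  have h := ((tendsto_inv_atTop_zero (𝕜 := ℝ)).const_mul c).add_const β
  rw [mul_zero, zero_add] at h
  refine h.congr' ?_
  filter_upwards [eventually_ne_atTop 0] with t ht
  field_simp

section Suspension

variable {Ω : Type*} (T : Equiv.Perm Ω) {f : Ω → AddCircle (1:ℝ)} {β : ℝ}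

theorem suspRel_respects_add_linear (hf : ∀ ω, f (T ω) = f ω + β) (p q : Ω × ℝ)
    (hpq : suspRel T p q) :
    f p.1 + ((β * p.2 : ℝ) : AddCircle (1:ℝ)) = f q.1 + ((β * q.2 : ℝ) : AddCircle (1:ℝ)) := by
  obtain ⟨n, hq₁, hq₂⟩ := hpq
  rw [hq₁, hq₂, apply_zpow_apply_of_apply_eq_add T hf, mul_sub, AddCircle.coe_sub,
    ← QuotientAddGroup.mk_zsmul, zsmul_eq_mul, mul_comm (n : ℝ)]
  abel

def suspLiftAddLinear (hf : ∀ ω, f (T ω) = f ω + β) : Susp T → AddCircle (1:ℝ) :=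
  Quot.lift (fun p => f p.1 + ((β * p.2 : ℝ) : AddCircle (1:ℝ)))
    (suspRel_respects_add_linear T hf)

theorem continuous_suspLiftAddLinear [TopologicalSpace Ω] (hf : ∀ ω, f (T ω) = f ω + β)
    (hfc : Continuous f) : Continuous (suspLiftAddLinear T hf) :=
  continuous_quot_lift _ <| (hfc.comp continuous_fst).add
    ((AddCircle.continuous_mk' 1).comp (continuous_const.mul continuous_snd))

theorem isRotNum_suspLiftAddLinear [MeasurableSpace Ω] (μ : Measure Ω)
    (hf : ∀ ω, f (T ω) = f ω + β) : IsRotNum T μ (suspLiftAddLinear T hf) β := by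
  refine Eventually.of_forall fun x g hg hlift => ?_
  obtain ⟨⟨ω, s⟩, rfl⟩ := Quot.exists_rep x
  have hgc (t : ℝ) : (g t : AddCircle (1:ℝ)) =
      (f ω + ((β * s : ℝ) : AddCircle (1:ℝ))) + ((β * t : ℝ) : AddCircle (1:ℝ)) := by
    rw [hlift, add_assoc, ← AddCircle.coe_add, ← mul_add]
    rfl
  simpa only [← eq_add_mul_of_coe_eq hg _ hgc] using tendsto_add_mul_div_atTop (g 0) β

end Suspension

theorem stmt_1_general {Ω : Type*} [TopologicalSpace Ω] [AddCommGroup Ω]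
    [MeasurableSpace Ω]
    (A : Ω ≃+ Ω)
    (b : Ω)
    (T : Equiv.Perm Ω) (hT : ∀ ω, T ω = A ω + b)
    (μ : Measure Ω)
    (χ : Ω →+ AddCircle (1:ℝ)) (hχ : Continuous χ) (hχA : ∀ ω, χ (A ω) = χ ω)
    (β : ℝ) (hβ : ((β : ℝ) : AddCircle (1:ℝ)) = χ b) :
    ∃ g : Susp T → AddCircle (1:ℝ), Continuous g ∧ IsRotNum T μ g β ∧
      ∀ p : Ω × ℝ, g (Quot.mk (suspRel T) p) = χ p.1 + ((β * p.2 : ℝ) : AddCircle (1:ℝ)) := by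
  have hχT (ω : Ω) : χ (T ω) = χ ω + β := by rw [hT, map_add, hχA, hβ]
  exact ⟨suspLiftAddLinear T hχT, continuous_suspLiftAddLinear T hχT hχ,
    isRotNum_suspLiftAddLinear T μ hχT, fun _ => rfl⟩

/-- for every `A`-invariant character `χ` and every `β ∈ π⁻¹(χ b)`, there is a
continuous map on the suspension of `(Ω, T_{A,b})` whose ν-a.e. rotation number is `β`;
one may take `g([ω,t]) = χ(ω) + π(β t)`. -/
theorem stmt_1 {Ω : Type*} [TopologicalSpace Ω] [AddCommGroup Ω] [IsTopologicalAddGroup Ω]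
    [CompactSpace Ω] [ConnectedSpace Ω] [T2Space Ω]
    [MeasurableSpace Ω] [BorelSpace Ω]
    (A : Ω ≃+ Ω) (hA : Continuous A) (hA' : Continuous A.symm)
    (b : Ω)
    (T : Equiv.Perm Ω) (hT : ∀ ω, T ω = A ω + b)
    (μ : Measure Ω) [IsProbabilityMeasure μ] (hErg : Ergodic (T : Ω → Ω) μ)
    (χ : Ω →+ AddCircle (1:ℝ)) (hχ : Continuous χ) (hχA : ∀ ω, χ (A ω) = χ ω)
    (β : ℝ) (hβ : ((β : ℝ) : AddCircle (1:ℝ)) = χ b) :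
    ∃ g : Susp T → AddCircle (1:ℝ), Continuous g ∧ IsRotNum T μ g β ∧
      ∀ p : Ω × ℝ, g (Quot.mk (suspRel T) p) = χ p.1 + ((β * p.2 : ℝ) : AddCircle (1:ℝ)) :=
  stmt_1_general A b T hT μ χ hχ hχA β hβ

end
end

section
/- Let Ω be a nonempty finite set with the discrete topology, T: Ω → Ω a bijection, and μ a T-ergodic Borel probability measure on Ω with support of cardinality p. Then the set of ν-a.e. rotation numbers of continuous maps from the suspension X of (Ω,T) to ℝ/ℤ equals (1/p)ℤ: every ν-a.e. rotation number lies in (1/p)ℤ, and every element of (1/p)ℤ arises as the ν-a.e. rotation number of some continuous map X → ℝ/ℤ. -/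
/-!
By ergodicity `μ` is carried by a single `T`-orbit, that of any atom `ω₀`, and this orbit has
exactly `p` points. Hence `ν`-almost every point of the suspension lies on the closed flow line
`t ↦ [ω₀, t]`, which has period `p`. Along it `t ↦ g (τ^t x)` is `p`-periodic, so two continuous
lifts `g̃(· + p)` and `g̃` differ by an integer `k`, `g̃(t) - (k/p) t` is bounded, and
`g̃(t)/t → k/p`. Conversely, `m` times the angle coordinate `[ω₀, t] ↦ t/p` of this circle
(extended by `0` to the `ν`-null remaining orbits) has rotation number `m/p`.
-/

open MeasureTheory Filter Topology

noncomputable section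

open Set Function MulAction Subgroup

section CircleLifts

theorem exists_continuous_lift_addCircle {X : Type*} [TopologicalSpace X]
    [SimplyConnectedSpace X] [LocallyPathConnectedSpace X] {G : X → AddCircle (1 : ℝ)}
    (hG : Continuous G) : ∃ g : X → ℝ, Continuous g ∧ ∀ x, (g x : AddCircle (1 : ℝ)) = G x := by
  obtain ⟨x₀⟩ := (inferInstance : Nonempty X)
  obtain ⟨r, hr⟩ := QuotientAddGroup.mk_surjective (G x₀)
  obtain ⟨F, ⟨-, hF⟩, -⟩ :=
    (AddCircle.isCoveringMap_coe (1 : ℝ)).existsUnique_continuousMap_lifts ⟨G, hG⟩ x₀ r hr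
  exact ⟨F, F.continuous, congrFun hF⟩

theorem exists_int_eq_add_of_coe_eq {X : Type*} [TopologicalSpace X] [PreconnectedSpace X]
    [Nonempty X] {f g : X → ℝ} (hf : Continuous f) (hg : Continuous g)
    (h : ∀ x, (f x : AddCircle (1 : ℝ)) = g x) : ∃ k : ℤ, ∀ x, f x = g x + k := by
  obtain ⟨x₀⟩ := (inferInstance : Nonempty X)
  obtain ⟨k, hk⟩ : ∃ k : ℤ, f x₀ - g x₀ = k := by
    obtain ⟨k, hk⟩ := (AddCircle.coe_eq_zero_iff (p := (1 : ℝ)) (x := f x₀ - g x₀)).mp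
      (by rw [AddCircle.coe_sub, h x₀, sub_self])
    exact ⟨k, by simpa using hk.symm⟩
  refine ⟨k, congrFun ((AddCircle.isCoveringMap_coe (1 : ℝ)).eq_of_comp_eq hf
    (hg.add continuous_const) (funext fun x => ?_) x₀ (by linarith))⟩
  simp [h x]

theorem tendsto_div_of_isBounded_range_sub {f : ℝ → ℝ} {a : ℝ}
    (hf : Bornology.IsBounded (range fun t => f t - a * t)) :
    Tendsto (fun t => f t / t) atTop (𝓝 a) := by
  obtain ⟨C, hC⟩ := hf.exists_norm_le
  have hrem : Tendsto (fun t => t⁻¹ * (f t - a * t)) atTop (𝓝 0) :=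
    tendsto_inv_atTop_zero.zero_mul_isBoundedUnder_le
      (isBoundedUnder_of ⟨C, fun t => hC _ (mem_range_self t)⟩)
  refine (add_zero a ▸ hrem.const_add a).congr' ?_
  filter_upwards [eventually_ne_atTop 0] with t ht
  field_simp
  ring

theorem exists_int_tendsto_div_of_periodic {G : ℝ → AddCircle (1 : ℝ)} {c : ℝ} (hc : c ≠ 0)
    (hG : Periodic G c) {g : ℝ → ℝ} (hg : Continuous g)
    (hlift : ∀ t, (g t : AddCircle (1 : ℝ)) = G t) :
    ∃ k : ℤ, Tendsto (fun t => g t / t) atTop (𝓝 (k / c)) := by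
  obtain ⟨k, hk⟩ := exists_int_eq_add_of_coe_eq (hg.comp (continuous_add_const c)) hg
    fun t => by simp only [comp_apply, hlift, hG t]
  refine ⟨k, tendsto_div_of_isBounded_range_sub ?_⟩
  refine Periodic.isBounded_of_continuous (fun t => ?_) hc (by fun_prop)
  simp only [comp_apply] at hk
  rw [hk]
  field_simp
  ring

theorem tendsto_div_of_coe_eq_affine {g : ℝ → ℝ} (hg : Continuous g) {a b : ℝ}
    (hlift : ∀ t, (g t : AddCircle (1 : ℝ)) = ((a * t + b : ℝ) : AddCircle (1 : ℝ))) :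
    Tendsto (fun t => g t / t) atTop (𝓝 a) := by
  obtain ⟨k, hk⟩ := exists_int_eq_add_of_coe_eq hg (by fun_prop) hlift
  refine tendsto_div_of_isBounded_range_sub
    ((Bornology.isBounded_singleton (x := b + k)).subset ?_)
  rintro _ ⟨t, rfl⟩
  simp only [mem_singleton_iff, hk t]
  ring

end CircleLifts

section Orbits

variable {Ω : Type*} (T : Equiv.Perm Ω) (ω₀ : Ω)

theorem mem_orbit_zpowers_iff {ω : Ω} :
    ω ∈ orbit (zpowers T) ω₀ ↔ ∃ n : ℤ, (T ^ n) ω₀ = ω := by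
  constructor
  · rintro ⟨⟨_, hg⟩, rfl⟩
    obtain ⟨n, rfl⟩ := mem_zpowers_iff.mp hg
    exact ⟨n, rfl⟩
  · rintro ⟨n, rfl⟩
    exact ⟨⟨T ^ n, zpow_mem_zpowers T n⟩, rfl⟩

theorem zpow_apply_mem_orbit_zpowers_iff (n : ℤ) {ω : Ω} :
    (T ^ n) ω ∈ orbit (zpowers T) ω₀ ↔ ω ∈ orbit (zpowers T) ω₀ := by
  rw [← orbit_eq_iff, ← orbit_eq_iff, ← orbit_smul (⟨T ^ n, zpow_mem_zpowers T n⟩ : zpowers T) ω]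
  rfl

theorem zpow_minimalPeriod_apply : (T ^ (minimalPeriod (T • ·) ω₀ : ℤ)) ω₀ = ω₀ :=
  zpow_smul_eq_iff_minimalPeriod_dvd (a := T) |>.mpr dvd_rfl

theorem orbitZPowersEquiv_eq_intCast [Finite Ω] {n : ℤ} {x : orbit (zpowers T) ω₀}
    (hx : (x : Ω) = (T ^ n) ω₀) : orbitZPowersEquiv T ω₀ x = n := by
  rw [← Equiv.eq_symm_apply, orbitZPowersEquiv_symm_apply']
  exact Subtype.ext hx

end Orbits

section Suspension

variable {Ω : Type*} (T : Equiv.Perm Ω)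

theorem suspFlow_mk (s : ℝ) (z : Ω × ℝ) :
    suspFlow T s (Quot.mk _ z) = Quot.mk _ (z.1, z.2 + s) := rfl

theorem susp_mk_zpow_apply (n : ℤ) (ω : Ω) (t : ℝ) :
    Quot.mk (suspRel T) ((T ^ n) ω, t) = Quot.mk _ (ω, t + n) :=
  (Quot.sound ⟨n, rfl, by simp⟩).symm

theorem continuous_suspFlow_mk [TopologicalSpace Ω] (z : Ω × ℝ) :
    Continuous fun s => suspFlow T s (Quot.mk _ z) :=
  continuous_quot_mk.comp (by fun_prop)

instance isProbabilityMeasure_suspMeasure [MeasurableSpace Ω] (μ : Measure Ω)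
    [IsProbabilityMeasure μ] : IsProbabilityMeasure (suspMeasure T μ) :=
  have : IsProbabilityMeasure (volume.restrict (Ioc (0 : ℝ) 1)) := ⟨by simp⟩
  Measure.isProbabilityMeasure_map measurable_quot_mk.aemeasurable

theorem ae_suspMeasure_exists_mk_eq [MeasurableSpace Ω] {μ : Measure Ω} [SFinite μ] {A : Set Ω}
    (hAm : MeasurableSet A) (hA : ∀ (n : ℤ) ω, (T ^ n) ω ∈ A ↔ ω ∈ A) (hμ : ∀ᵐ ω ∂μ, ω ∈ A) :
    ∀ᵐ x ∂suspMeasure T μ, ∃ ω ∈ A, ∃ t, Quot.mk _ (ω, t) = x := by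
  let B : Set (Susp T) :=
    {x | Quot.lift (fun z => z.1 ∈ A) (fun z w ⟨n, hw, _⟩ => by rw [hw, hA]) x}
  have hB : MeasurableSet B := measurable_fst hAm
  have hBae : ∀ᵐ x ∂suspMeasure T μ, x ∈ B :=
    (ae_map_iff measurable_quot_mk.aemeasurable hB).2 (Measure.quasiMeasurePreserving_fst.ae hμ)
  exact hBae.mono (Quot.ind fun z hz => ⟨z.1, hz, z.2, rfl⟩)

end Suspension

theorem exists_measure_singleton_ne_zero {Ω : Type*} [MeasurableSpace Ω] [Countable Ω]
    {μ : Measure Ω} (hμ : μ ≠ 0) : ∃ ω, μ {ω} ≠ 0 := by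
  by_contra! h
  exact hμ (Measure.measure_univ_eq_zero.mp (by
    rw [← iUnion_of_singleton Ω]
    exact measure_iUnion_null h))

section Ergodic

variable {Ω : Type*} [MeasurableSpace Ω] [MeasurableSingletonClass Ω] {T : Equiv.Perm Ω}
  {μ : Measure Ω}

theorem measure_singleton_zpow_apply (hT : MeasurePreserving T μ μ) (n : ℤ) (ω : Ω) :
    μ {(T ^ n) ω} = μ {ω} := by
  have hT1 (ω : Ω) : μ {T ω} = μ {ω} := by
    rw [← hT.measure_preimage (measurableSet_singleton _).nullMeasurableSet, ← image_singleton,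
      T.injective.preimage_image]
  induction n using Int.induction_on generalizing ω with
  | zero => simp
  | succ i ih => rw [zpow_add_one, Equiv.Perm.mul_apply, ih, hT1]
  | pred i ih =>
    rw [zpow_sub_one, Equiv.Perm.mul_apply, ih, ← hT1 (T⁻¹ ω),
      Equiv.Perm.inv_def, Equiv.apply_symm_apply]

theorem ae_mem_orbit_zpowers [Countable Ω] (hT : Ergodic T μ) {ω₀ : Ω} (h₀ : μ {ω₀} ≠ 0) :
    ∀ᵐ ω ∂μ, ω ∈ orbit (zpowers T) ω₀ := by
  have hinv : ⇑T ⁻¹' orbit (zpowers T) ω₀ = orbit (zpowers T) ω₀ := by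
    ext ω
    simpa using zpow_apply_mem_orbit_zpowers_iff T ω₀ 1 (ω := ω)
  refine (hT.toPreErgodic.ae_mem_or_ae_notMem (to_countable _).measurableSet hinv).resolve_right
    fun h => h₀ ?_
  exact measure_mono_null (singleton_subset_iff.2 (not_not.2 (mem_orbit_self ω₀))) (ae_iff.mp h)

theorem setOf_measure_singleton_pos_eq_orbit [Countable Ω] (hT : Ergodic T μ) {ω₀ : Ω}
    (h₀ : μ {ω₀} ≠ 0) : {ω | 0 < μ {ω}} = orbit (zpowers T) ω₀ := by
  ext ω
  constructor
  · intro hω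
    by_contra hnot
    exact hω.ne' (measure_mono_null (singleton_subset_iff.2 hnot)
      (ae_iff.mp (ae_mem_orbit_zpowers hT h₀)))
  · intro hω
    obtain ⟨n, rfl⟩ := (mem_orbit_zpowers_iff T ω₀).1 hω
    rw [mem_ofPred_eq, measure_singleton_zpow_apply hT.toMeasurePreserving]
    exact pos_iff_ne_zero.2 h₀

theorem ae_suspMeasure_exists_eq_mk_of_ergodic [Countable Ω] [SFinite μ] (hT : Ergodic T μ) {ω₀ : Ω}
    (h₀ : μ {ω₀} ≠ 0) : ∀ᵐ x ∂suspMeasure T μ, ∃ s, x = Quot.mk _ (ω₀, s) := by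
  refine (ae_suspMeasure_exists_mk_eq T (to_countable _).measurableSet
    (fun n _ => zpow_apply_mem_orbit_zpowers_iff T ω₀ n) (ae_mem_orbit_zpowers hT h₀)).mono ?_
  rintro _ ⟨ω, hω, t, rfl⟩
  obtain ⟨n, rfl⟩ := (mem_orbit_zpowers_iff T ω₀).1 hω
  exact ⟨t + n, susp_mk_zpow_apply T n ω₀ t⟩

end Ergodic

section Angle

variable {Ω : Type*} [Finite Ω] (T : Equiv.Perm Ω) (ω₀ : Ω)

open scoped Classical in
/-- `(T ^ j ω₀, t) ↦ (j + t) / q mod 1`, where `q` is the period of `ω₀`; `0` off its orbit. -/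
def orbitAngle (z : Ω × ℝ) : AddCircle (1 : ℝ) :=
  if h : z.1 ∈ orbit (zpowers T) ω₀ then
    ZMod.toAddCircle (orbitZPowersEquiv T ω₀ ⟨z.1, h⟩) +
      ((z.2 / minimalPeriod (T • ·) ω₀ : ℝ) : AddCircle (1 : ℝ))
  else 0

theorem orbitAngle_eq_of_suspRel {z w : Ω × ℝ} (h : suspRel T z w) :
    orbitAngle T ω₀ z = orbitAngle T ω₀ w := by
  obtain ⟨ω, t⟩ := z
  obtain ⟨ω', t'⟩ := w
  obtain ⟨n, rfl : ω' = _, rfl : t' = _⟩ := h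
  by_cases hω : ω ∈ orbit (zpowers T) ω₀
  · obtain ⟨j, rfl⟩ := (mem_orbit_zpowers_iff T ω₀).1 hω
    have hω' := (zpow_apply_mem_orbit_zpowers_iff T ω₀ n).2 hω
    simp only [orbitAngle, dif_pos hω, dif_pos hω']
    rw [orbitZPowersEquiv_eq_intCast T ω₀ rfl,
      orbitZPowersEquiv_eq_intCast T ω₀ (n := n + j) (by rw [zpow_add, Equiv.Perm.mul_apply]),
      ZMod.toAddCircle_intCast, ZMod.toAddCircle_intCast, ← AddCircle.coe_add,
      ← AddCircle.coe_add]
    congr 1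
    push_cast
    ring
  · have hω' := mt (zpow_apply_mem_orbit_zpowers_iff T ω₀ n).1 hω
    simp only [orbitAngle, dif_neg hω, dif_neg hω']

def suspAngle : Susp T → AddCircle (1 : ℝ) :=
  Quot.lift (orbitAngle T ω₀) fun _ _ => orbitAngle_eq_of_suspRel T ω₀

theorem continuous_suspAngle [TopologicalSpace Ω] [DiscreteTopology Ω] :
    Continuous (suspAngle T ω₀) :=
  continuous_quot_lift _ <| continuous_prod_of_discrete_left.2 fun ω => by
    dsimp only [orbitAngle]
    split_ifs <;> fun_prop

theorem suspAngle_mk_self (t : ℝ) :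
    suspAngle T ω₀ (Quot.mk _ (ω₀, t)) =
      ((t / minimalPeriod (T • ·) ω₀ : ℝ) : AddCircle (1 : ℝ)) := by
  have h₀ : orbitZPowersEquiv T ω₀ ⟨ω₀, mem_orbit_self ω₀⟩ = ((0 : ℤ) : ZMod _) :=
    orbitZPowersEquiv_eq_intCast T ω₀ (by simp)
  simp [suspAngle, orbitAngle, mem_orbit_self, h₀]

end Angle

section RotationNumber

variable {Ω : Type*} (T : Equiv.Perm Ω)

def IsRotNumAt (g : Susp T → AddCircle (1 : ℝ)) (x : Susp T) (β : ℝ) : Prop :=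
  ∀ g' : ℝ → ℝ, Continuous g' →
    (∀ t : ℝ, ((g' t : ℝ) : AddCircle (1 : ℝ)) = g (suspFlow T t x)) →
    Tendsto (fun t => g' t / t) atTop (𝓝 β)

theorem isRotNum_iff [MeasurableSpace Ω] {μ : Measure Ω} {g : Susp T → AddCircle (1 : ℝ)}
    {β : ℝ} : IsRotNum T μ g β ↔ ∀ᵐ x ∂suspMeasure T μ, IsRotNumAt T g x β :=
  Iff.rfl

variable [Finite Ω] (ω₀ : Ω)

theorem IsRotNumAt.exists_int_eq_div [TopologicalSpace Ω] {g : Susp T → AddCircle (1 : ℝ)}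
    (hg : Continuous g) {s β : ℝ} (h : IsRotNumAt T g (Quot.mk _ (ω₀, s)) β) :
    ∃ k : ℤ, β = k / minimalPeriod (T • ·) ω₀ := by
  set q := minimalPeriod (T • ·) ω₀
  have hG : Periodic (fun t => g (suspFlow T t (Quot.mk _ (ω₀, s)))) q := fun t => by
    have hmk := susp_mk_zpow_apply T q ω₀ (s + t)
    rw [zpow_minimalPeriod_apply] at hmk
    simp only [suspFlow_mk, ← add_assoc, Int.cast_natCast] at hmk ⊢
    rw [← hmk]
  obtain ⟨g', hg'c, hg'⟩ := exists_continuous_lift_addCircle (hg.comp (continuous_suspFlow_mk T _))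
  obtain ⟨k, hk⟩ :=
    exists_int_tendsto_div_of_periodic (Nat.cast_ne_zero.2 (NeZero.ne q)) hG hg'c hg'
  exact ⟨k, tendsto_nhds_unique (h g' hg'c hg') hk⟩

theorem isRotNumAt_zsmul_suspAngle (m : ℤ) (s : ℝ) :
    IsRotNumAt T (fun x => m • suspAngle T ω₀ x) (Quot.mk _ (ω₀, s))
      (m / minimalPeriod (T • ·) ω₀) := by
  intro g' hg' hlift
  refine tendsto_div_of_coe_eq_affine hg' (b := m * s / minimalPeriod (T • ·) ω₀) fun t => ?_
  rw [hlift, suspFlow_mk]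
  dsimp only
  rw [suspAngle_mk_self, ← AddCircle.coe_zsmul]
  congr 1
  rw [zsmul_eq_mul]
  ring

end RotationNumber

theorem stmt_16_general {Ω : Type*} [Fintype Ω]
    [TopologicalSpace Ω] [DiscreteTopology Ω]
    [MeasurableSpace Ω] [MeasurableSingletonClass Ω]
    (T : Equiv.Perm Ω)
    (μ : Measure Ω) [IsProbabilityMeasure μ] (hErg : Ergodic (T : Ω → Ω) μ)
    (p : ℕ) (hp : Nat.card {ω : Ω // 0 < μ {ω}} = p) :
    (∀ g : Susp T → AddCircle (1:ℝ), Continuous g → ∀ β : ℝ,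
      IsRotNum T μ g β → ∃ m : ℤ, β = m / p) ∧
    (∀ m : ℤ, ∃ g : Susp T → AddCircle (1:ℝ), Continuous g ∧
      IsRotNum T μ g (m / p)) := by
  obtain ⟨ω₀, h₀⟩ := exists_measure_singleton_ne_zero (IsProbabilityMeasure.ne_zero μ)
  have hae := ae_suspMeasure_exists_eq_mk_of_ergodic hErg h₀
  obtain rfl : p = minimalPeriod (T • ·) ω₀ := by
    rw [← hp, ← Nat.card_zmod (minimalPeriod (T • ·) ω₀), ← Nat.card_congr (orbitZPowersEquiv T ω₀),
      ← setOf_measure_singleton_pos_eq_orbit hErg h₀]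
    rfl
  refine ⟨fun g hg β hβ => ?_, fun m => ⟨_, (continuous_suspAngle T ω₀).zsmul m, ?_⟩⟩
  · obtain ⟨_, ⟨s, rfl⟩, hx⟩ := (hae.and ((isRotNum_iff T).1 hβ)).exists
    exact hx.exists_int_eq_div T ω₀ hg
  · exact (isRotNum_iff T).2 (hae.mono fun _ ⟨s, hs⟩ => hs ▸ isRotNumAt_zsmul_suspAngle T ω₀ m s)

/-- for an ergodic bijection `T` of a finite set `Ω` whose ergodic measure `μ`
has support of cardinality `p`, the set of ν-a.e. rotation numbers of continuous maps on the
suspension of `(Ω,T)` equals `(1/p)ℤ`. -/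
theorem stmt_16 {Ω : Type*} [Fintype Ω] [Nonempty Ω]
    [TopologicalSpace Ω] [DiscreteTopology Ω]
    [MeasurableSpace Ω] [MeasurableSingletonClass Ω]
    (T : Equiv.Perm Ω)
    (μ : Measure Ω) [IsProbabilityMeasure μ] (hErg : Ergodic (T : Ω → Ω) μ)
    (p : ℕ) (hp : Nat.card {ω : Ω // 0 < μ {ω}} = p) :
    (∀ g : Susp T → AddCircle (1:ℝ), Continuous g → ∀ β : ℝ,
      IsRotNum T μ g β → ∃ m : ℤ, β = m / p) ∧
    (∀ m : ℤ, ∃ g : Susp T → AddCircle (1:ℝ), Continuous g ∧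
      IsRotNum T μ g (m / p)) :=
  stmt_16_general T μ hErg p hp
end
end

section
/- Let Ω = ℤ/3ℤ with the discrete topology, T: Ω → Ω the automorphism ω ↦ 2ω, and μ the uniform measure on {1,2} ⊆ ℤ/3ℤ. Then: (i) μ is T-ergodic; (ii) the set of ν-a.e. rotation numbers of continuous maps from the suspension X of (Ω,T) to ℝ/ℤ equals (1/2)ℤ; (iii) the only group homomorphism χ: ℤ/3ℤ → ℝ/ℤ with χ∘T = χ is the trivial one, so that ∪_{χ: χ∘T = χ} π^{-1}(χ(0)) = ℤ. In particular (1/2)ℤ ≠ ℤ, so the identity 𝔄(Ω,T,μ) = ∪_{χ∈ker(Â−I)} π^{-1}(χ b) fails for this disconnected group with b = 0 (which lies in the path component of the identity). -/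
/-!
Rotation numbers can be read off along a single orbit of the flow. The point `1` carries mass
under `μ` and has period 2 under `T`, so almost-sure statements hold along some orbit through
`[1, t₀]`; there `g` is 2-periodic in time, hence any lift satisfies `g̃ (t + 2) = g̃ t + m` with
`m ∈ ℤ`, and the rotation number is `m / 2`. Conversely, winding `m` times around the circle along
the period-2 orbit `{1, 2}` (and standing still over the `μ`-null fixed point `0`) realizes `m / 2`.
A doubling-invariant character has `χ 1 = χ 2 = 2 χ 1 = 0`, so the character side is `ℤ ∌ 1 / 2`.
-/

open MeasureTheory Filter Topology

noncomputable section

instance : TopologicalSpace (ZMod 3) := ⊥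
instance : DiscreteTopology (ZMod 3) := ⟨rfl⟩
instance : MeasurableSpace (ZMod 3) := ⊤
instance : MeasurableSingletonClass (ZMod 3) := ⟨fun _ => trivial⟩

namespace AddCircle

theorem coe_add_intCast (x : ℝ) (n : ℤ) : ((x + n : ℝ) : AddCircle (1:ℝ)) = x := by
  rw [← coe_fract, Int.fract_add_intCast, coe_fract]

theorem exists_continuous_lift {A : Type*} [TopologicalSpace A] [SimplyConnectedSpace A]
    [LocallyPathConnectedSpace A] {F : A → AddCircle (1:ℝ)} (hF : Continuous F) :
    ∃ G : A → ℝ, Continuous G ∧ ∀ a, (G a : AddCircle (1:ℝ)) = F a := by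
  obtain ⟨a₀⟩ : Nonempty A := inferInstance
  obtain ⟨x₀, hx₀⟩ := QuotientAddGroup.mk_surjective (F a₀)
  obtain ⟨G, ⟨-, hG⟩, -⟩ :=
    (isCoveringMap_coe (1:ℝ)).existsUnique_continuousMap_lifts ⟨F, hF⟩ a₀ x₀ hx₀
  exact ⟨G, G.continuous, congr_fun hG⟩

theorem sub_eq_sub_of_coe_eq {A : Type*} [TopologicalSpace A] [PreconnectedSpace A]
    {G₁ G₂ : A → ℝ} (h₁ : Continuous G₁) (h₂ : Continuous G₂)
    (h : ∀ a, (G₁ a : AddCircle (1:ℝ)) = G₂ a) (a a' : A) :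
    G₁ a - G₂ a = G₁ a' - G₂ a' :=
  (isCoveringMap_coe (1:ℝ)).const_of_comp (h₁.sub h₂)
    (fun a a' => by simp only [Pi.sub_apply, QuotientAddGroup.mk_sub, h, sub_self]) a a'

end AddCircle

theorem tendsto_div_atTop_of_add_period {G : ℝ → ℝ} (hG : Continuous G) {P c : ℝ} (hP : 0 < P)
    (h : ∀ t, G (t + P) = G t + c) : Tendsto (fun t => G t / t) atTop (𝓝 (c / P)) := by
  set H : ℝ → ℝ := fun t => G t - c / P * t
  have hH : Function.Periodic H P := fun t => by
    show G (t + P) - c / P * (t + P) = G t - c / P * t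
    rw [h]
    field_simp
    ring
  obtain ⟨C, hC⟩ := (hH.compact_of_continuous hP.ne' (by fun_prop)).isBounded.exists_norm_le
  have hHt : Tendsto (fun t => t⁻¹ * H t) atTop (𝓝 0) :=
    tendsto_inv_atTop_zero.zero_mul_isBoundedUnder_le
      (isBoundedUnder_of ⟨C, fun t => hC _ ⟨t, rfl⟩⟩)
  refine (by simpa using hHt.const_add (c / P) : Tendsto _ atTop (𝓝 (c / P))).congr' ?_
  filter_upwards [eventually_ne_atTop 0] with t ht
  simp only [H]
  field_simp
  ring

theorem tendsto_div_atTop_of_coe_eq_affine {G : ℝ → ℝ} (hG : Continuous G) (a b : ℝ)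
    (h : ∀ t, (G t : AddCircle (1:ℝ)) = ↑(a + b * t)) :
    Tendsto (fun t => G t / t) atTop (𝓝 b) := by
  have hstep : ∀ t, G (t + 1) = G t + b := fun t => by
    linarith [AddCircle.sub_eq_sub_of_coe_eq hG (by fun_prop) h (t + 1) t]
  simpa using tendsto_div_atTop_of_add_period hG one_pos hstep

theorem exists_tendsto_div_atTop_of_periodic {G : ℝ → ℝ} (hG : Continuous G) {P : ℝ}
    (hP : 0 < P) (hper : Function.Periodic (fun t => (G t : AddCircle (1:ℝ))) P) :
    ∃ m : ℤ, Tendsto (fun t => G t / t) atTop (𝓝 (m / P)) := by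
  obtain ⟨m, hm⟩ : ∃ m : ℤ, G P - G 0 = m := by
    have h0 : ((G P - G 0 : ℝ) : AddCircle (1:ℝ)) = 0 := by
      rw [QuotientAddGroup.mk_sub, sub_eq_zero]
      simpa using hper 0
    obtain ⟨m, hm⟩ := (AddCircle.coe_eq_zero_iff (1:ℝ)).1 h0
    exact ⟨m, by simpa using hm.symm⟩
  refine ⟨m, tendsto_div_atTop_of_add_period hG hP fun t => ?_⟩
  have := AddCircle.sub_eq_sub_of_coe_eq (hG.comp (continuous_add_const P)) hG hper t 0
  simp only [Function.comp_apply, zero_add] at this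
  linarith

section Suspension

variable {Ω : Type*} {T : Equiv.Perm Ω}

theorem suspRel.apply_eq_of_step {β : Type*} {f : Ω × ℝ → β}
    (hf : ∀ ω t, f (T ω, t - 1) = f (ω, t)) {p q : Ω × ℝ} (h : suspRel T p q) : f p = f q := by
  obtain ⟨ω, t⟩ := p
  obtain ⟨ω', t'⟩ := q
  obtain ⟨n, h₁, h₂⟩ := h
  dsimp only at h₁ h₂
  subst h₁ h₂
  induction n using Int.induction_on generalizing ω t with
  | zero => simp
  | succ n ih =>
    rw [zpow_add_one, Equiv.Perm.mul_apply, ← hf ω t, ih]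
    congr 2
    push_cast
    ring
  | pred n ih =>
    have h := ih (T⁻¹ ω) (t + 1)
    rw [← hf, Equiv.Perm.coe_inv, Equiv.apply_symm_apply, add_sub_cancel_right] at h
    rw [zpow_sub_one, Equiv.Perm.mul_apply, h]
    congr 2
    push_cast
    ring

theorem suspRel.mk_zpow_apply (n : ℤ) (ω : Ω) (t : ℝ) :
    Quot.mk (suspRel T) ((T ^ n) ω, t) = Quot.mk (suspRel T) (ω, t + n) :=
  (Quot.sound ⟨n, rfl, by simp⟩).symm

theorem ae_suspMeasure_of_forall_mk [MeasurableSpace Ω] {μ : Measure Ω} {S : Set Ω}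
    (hS : MeasurableSet S) (hTS : ∀ ω, T ω ∈ S ↔ ω ∈ S) (hμS : ∀ᵐ ω ∂μ, ω ∈ S)
    {P : Susp T → Prop} (hP : ∀ ω ∈ S, ∀ t, P (Quot.mk _ (ω, t))) :
    ∀ᵐ x ∂suspMeasure T μ, P x := by
  let B : Set (Susp T) :=
    {x | Quot.lift (fun p => p.1 ∈ S) (fun _ _ => suspRel.apply_eq_of_step
      (f := fun p : Ω × ℝ => p.1 ∈ S) fun ω _ => propext (hTS ω)) x}
  have hB : ∀ᵐ x ∂suspMeasure T μ, x ∈ B :=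
    (ae_map_iff measurable_quot_mk.aemeasurable (show MeasurableSet B from measurable_fst hS)).2
      (Measure.quasiMeasurePreserving_fst.ae hμS)
  filter_upwards [hB] with x hx
  induction x using Quot.ind
  exact hP _ hx _

theorem exists_mk_of_ae_suspMeasure [MeasurableSpace Ω] {μ : Measure Ω} {P : Susp T → Prop}
    (h : ∀ᵐ x ∂suspMeasure T μ, P x) {ω : Ω} (hω : μ {ω} ≠ 0) :
    ∃ t, P (Quot.mk _ (ω, t)) := by
  by_contra! hne
  have hnull := ae_iff.1 (ae_of_ae_map measurable_quot_mk.aemeasurable h)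
  have : (μ.prod (volume.restrict (Set.Ioc (0:ℝ) 1))) ({ω} ×ˢ Set.univ) = 0 :=
    measure_mono_null (by rintro ⟨_, t⟩ ⟨rfl, -⟩; exact hne t) hnull
  simp [Measure.prod_prod, hω] at this

theorem IsRotNum.exists_eq_int_div [TopologicalSpace Ω] [MeasurableSpace Ω] {μ : Measure Ω}
    {g : Susp T → AddCircle (1:ℝ)} (hg : Continuous g) {β : ℝ} (hβ : IsRotNum T μ g β)
    {ω : Ω} {p : ℕ} (hp : 0 < p) (hωp : (T ^ p) ω = ω) (hμω : μ {ω} ≠ 0) :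
    ∃ m : ℤ, β = m / p := by
  obtain ⟨t₀, ht₀⟩ := exists_mk_of_ae_suspMeasure hβ hμω
  have hF : Continuous fun t => g (suspFlow T t (Quot.mk _ (ω, t₀))) :=
    hg.comp (continuous_quot_mk.comp (by fun_prop))
  obtain ⟨G, hGc, hG⟩ := AddCircle.exists_continuous_lift hF
  have hper : Function.Periodic (fun t => (G t : AddCircle (1:ℝ))) p := fun t => by
    simp only [hG]
    show g (Quot.mk _ (ω, t₀ + (t + p))) = g (Quot.mk _ (ω, t₀ + t))
    rw [← add_assoc, ← Int.cast_natCast, ← suspRel.mk_zpow_apply, zpow_natCast, hωp]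
  obtain ⟨m, hm⟩ := exists_tendsto_div_atTop_of_periodic hGc (by positivity) hper
  exact ⟨m, tendsto_nhds_unique (ht₀ G hGc hG) hm⟩

end Suspension

theorem ergodic_smul_dirac_add_dirac {Ω : Type*} [MeasurableSpace Ω] [MeasurableSingletonClass Ω]
    {T : Ω → Ω} (hT : Measurable T) {a b : Ω} (ha : T a = b) (hb : T b = a) (c : ENNReal) :
    Ergodic T (c • (Measure.dirac a + Measure.dirac b)) := by
  refine ⟨⟨hT, ?_⟩, ⟨fun s _ hs => ?_⟩⟩
  · rw [Measure.map_smul, Measure.map_add _ _ hT, Measure.map_dirac' hT, Measure.map_dirac' hT,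
      ha, hb, add_comm]
  · have hab : a ∈ s ↔ b ∈ s := by
      rw [← hs, Set.mem_preimage, ha, hs]
    refine EventuallyConst.anti ?_ (Measure.ae_smul_measure_le c)
    simp only [eventuallyConst_set, ae_add_measure_iff, ae_dirac_eq, eventually_pure]
    tauto

theorem AddMonoidHom.eq_zero_of_map_two_mul {A : Type*} [AddCommGroup A] (χ : ZMod 3 →+ A)
    (hχ : ∀ ω, χ (2 * ω) = χ ω) : χ = 0 := by
  have h1 : χ 1 = 0 := by
    have h := hχ 1
    rwa [show (2 : ZMod 3) * 1 = 1 + 1 by decide, map_add, add_eq_right] at h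
  ext ω
  obtain rfl | rfl | rfl : ω = 0 ∨ ω = 1 ∨ ω = 2 := by revert ω; decide
  · exact map_zero χ
  · exact h1
  · simpa using (hχ 1).trans h1

theorem exists_continuous_isRotNum_half {T : Equiv.Perm (ZMod 3)} (hT : ∀ ω, T ω = 2 * ω)
    {μ : Measure (ZMod 3)} (hμ : ∀ᵐ ω ∂μ, ω ≠ 0) (m : ℤ) :
    ∃ g : Susp T → AddCircle (1:ℝ), Continuous g ∧ IsRotNum T μ g (m / 2) := by
  -- The phase `1` at `ω = 2` makes `f (T ω, t - 1) = f (ω, t)` exact for `ω = 1` and correct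
  -- modulo the integer `m` for `ω = 2`.
  let f : ZMod 3 × ℝ → AddCircle (1:ℝ) := fun p =>
    if p.1 = 0 then 0 else ↑(m / 2 * (p.2 + if p.1 = 2 then 1 else 0) : ℝ)
  have hf : ∀ ω t, f (T ω, t - 1) = f (ω, t) := by
    intro ω t
    rw [hT]
    obtain rfl | rfl | rfl : ω = 0 ∨ ω = 1 ∨ ω = 2 := by revert ω; decide
    · rfl
    · simp (config := {decide := true}) only [f, if_true, if_false, sub_add_cancel, add_zero]
    · simp (config := {decide := true}) only [f, if_true, if_false, add_zero]
      rw [show (m / 2 * (t + 1) : ℝ) = m / 2 * (t - 1) + m by ring, AddCircle.coe_add_intCast]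
  have hfc : Continuous f := continuous_prod_of_discrete_left.2 fun ω => by
    simp only [f]
    split_ifs <;> fun_prop
  refine ⟨Quot.lift f fun _ _ => suspRel.apply_eq_of_step hf, continuous_quot_lift _ hfc, ?_⟩
  refine ae_suspMeasure_of_forall_mk (S := {0}ᶜ) (measurableSet_singleton 0).compl
    (fun ω => by simp only [Set.mem_compl_singleton_iff, hT]; revert ω; decide) hμ
    fun ω hω t₀ G hGc hG => ?_
  refine tendsto_div_atTop_of_coe_eq_affine hGc (m / 2 * (t₀ + if ω = 2 then 1 else 0)) (m / 2)
    fun t => ?_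
  rw [hG]
  show f (ω, t₀ + t) = _
  simp only [f, if_neg (show ω ≠ 0 from hω)]
  ring_nf

/-- for the automorphism `T : ω ↦ 2ω` of `ℤ/3ℤ` and `μ` the uniform measure on
`{1,2}`: (i) `μ` is `T`-ergodic; (ii) the set of ν-a.e. rotation numbers on the suspension is
`(1/2)ℤ`; (iii) the only `T`-invariant character of `ℤ/3ℤ` is trivial; in particular the set of
rotation numbers differs from `⋃_{χ∘T=χ} π⁻¹(χ 0) = ℤ`, so the Schwartzman-group identity fails
for this disconnected group (with `b = 0` in the path component of the identity). -/
theorem stmt_17 (T : Equiv.Perm (ZMod 3)) (hT : ∀ ω : ZMod 3, T ω = 2 * ω)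
    (μ : Measure (ZMod 3))
    (hμ : μ = (2:ENNReal)⁻¹ • (Measure.dirac (1 : ZMod 3) + Measure.dirac (2 : ZMod 3))) :
    Ergodic (T : ZMod 3 → ZMod 3) μ ∧
    (∀ β : ℝ,
      (∃ g : Susp T → AddCircle (1:ℝ), Continuous g ∧ IsRotNum T μ g β) ↔
        ∃ m : ℤ, β = m / 2) ∧
    (∀ χ : ZMod 3 →+ AddCircle (1:ℝ), (∀ ω, χ (T ω) = χ ω) → χ = 0) ∧
    {β : ℝ | ∃ g : Susp T → AddCircle (1:ℝ), Continuous g ∧ IsRotNum T μ g β} ≠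
      {β : ℝ | ∃ χ : ZMod 3 →+ AddCircle (1:ℝ), Continuous χ ∧ (∀ ω, χ (T ω) = χ ω) ∧
        ((β : ℝ) : AddCircle (1:ℝ)) = χ 0} := by
  have hμ0 : ∀ᵐ ω ∂μ, ω ≠ 0 := by
    subst hμ
    refine Measure.ae_smul_measure ?_ _
    rw [ae_add_measure_iff, ae_dirac_eq, ae_dirac_eq]
    exact ⟨eventually_pure.2 (by decide), eventually_pure.2 (by decide)⟩
  have hμ1 : μ {1} ≠ 0 := by simp [hμ]
  have hT1 : (T ^ 2) 1 = 1 := by simp only [sq, Equiv.Perm.mul_apply, hT]; decide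
  have hrot : ∀ β : ℝ, (∃ g : Susp T → AddCircle (1:ℝ), Continuous g ∧ IsRotNum T μ g β) ↔
      ∃ m : ℤ, β = m / 2 := fun β =>
    ⟨fun ⟨g, hg, hβ⟩ => by exact_mod_cast hβ.exists_eq_int_div hg two_pos hT1 hμ1,
      fun ⟨m, hm⟩ => hm ▸ exists_continuous_isRotNum_half hT hμ0 m⟩
  have hχ : ∀ χ : ZMod 3 →+ AddCircle (1:ℝ), (∀ ω, χ (T ω) = χ ω) → χ = 0 := fun χ h =>
    χ.eq_zero_of_map_two_mul fun ω => hT ω ▸ h ω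
  refine ⟨?_, hrot, hχ, fun heq => ?_⟩
  · rw [hμ]
    exact ergodic_smul_dirac_add_dirac (measurable_of_countable _) (by rw [hT]; decide)
      (by rw [hT]; decide) _
  obtain ⟨χ, -, hχT, hχ0⟩ := (Set.ext_iff.1 heq (1 / 2)).1 ((hrot _).2 ⟨1, by norm_num⟩)
  rw [hχ χ hχT, AddMonoidHom.zero_apply] at hχ0
  have h := AddCircle.addOrderOf_period_div (p := (1:ℝ)) (n := 2) two_pos
  rw [Nat.cast_ofNat, hχ0, addOrderOf_zero] at h
  exact absurd h (by norm_num)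
end
end

section
/- Let Ω be a compact connected abelian topological group, A: Ω → Ω a continuous group automorphism, and X₀ = (Ω × [0,1])/((ω,1) ∼ (Aω, 0)) the suspension of (Ω, A). Suppose h: X₀ → ℝ/ℤ is continuous and satisfies: h([ω,0]) = 0 for all ω ∈ Ω; h([0,t]) = 0 for all t ∈ [0,1]; and for each t ∈ [0,1] the map ω ↦ h([ω,t]) from Ω to ℝ/ℤ is nullhomotopic. Then h is nullhomotopic; equivalently, there exists a continuous h̃: X₀ → ℝ with π∘h̃ = h. -/
open MeasureTheory Filter Topology

noncomputable section

/-- The identification `(ω, 1) ∼ (S ω, 0)` defining the suspension `(Ω × [0,1])/∼`. -/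
def suspRelI {Ω : Type*} (S : Ω → Ω) :
    Ω × (Set.Icc (0:ℝ) 1) → Ω × (Set.Icc (0:ℝ) 1) → Prop :=
  fun p q => (p.2 : ℝ) = 1 ∧ (q.2 : ℝ) = 0 ∧ q.1 = S p.1

/-- The suspension `X = (Ω × [0,1])/((ω,1) ∼ (S ω, 0))`. -/
abbrev SuspI {Ω : Type*} (S : Ω → Ω) := Quot (suspRelI S)

/-!
Lift the loops `t ↦ h [ω, t]` through the covering `ℝ → ℝ/ℤ`, simultaneously in `ω`, starting
from `0` at `t = 0` (homotopy lifting). At `t = 1` the lift takes values in `ℤ`, so it is constant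
on the connected group `Ω`, and it is `0` at `ω = 0` since `h` vanishes on `[0, t]`. Hence the lift
vanishes on both ends of `Ω × [0,1]` and descends to `X₀`; a map factoring through the
contractible `ℝ` is nullhomotopic.
-/

open unitInterval

namespace IsCoveringMap

variable {E X A : Type*} [TopologicalSpace E] [TopologicalSpace X] [TopologicalSpace A]
  {p : E → X}

theorem exists_homotopy_lift_const_ends [PreconnectedSpace A] (cov : IsCoveringMap p)
    (H : C(I × A, X)) {e : E} {a₀ : A} (h0 : ∀ a, H (0, a) = p e) (h1 : ∀ a, H (1, a) = p e)
    (hbase : ∀ t, H (t, a₀) = p e) :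
    ∃ G : C(I × A, E), p ∘ G = H ∧ ∀ a, G (0, a) = e ∧ G (1, a) = e := by
  set G := cov.liftHomotopy H (.const A e) h0
  have hG : ∀ x, p (G x) = H x := congr_fun (cov.liftHomotopy_lifts H _ h0)
  have hG0 : ∀ a, G (0, a) = e := cov.liftHomotopy_zero H _ h0
  have hbase' : G (1, a₀) = e := by
    rw [← hG0 a₀]
    exact cov.const_of_comp (g := fun t => G (t, a₀)) (by fun_prop)
      (fun t t' => by simp only [hG, hbase]) 1 0
  refine ⟨G, funext hG, fun a => ⟨hG0 a, ?_⟩⟩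
  rw [← hbase']
  exact cov.const_of_comp (g := fun a => G (1, a)) (by fun_prop)
    (fun a a' => by simp only [hG, h1]) a a₀

end IsCoveringMap

theorem ContinuousMap.nullhomotopic_comp_of_contractibleSpace {Y Z W : Type*}
    [TopologicalSpace Y] [TopologicalSpace Z] [TopologicalSpace W] [ContractibleSpace Z]
    (g : C(Z, W)) (f : C(Y, Z)) : (g.comp f).Nullhomotopic := by
  simpa using ((id_nullhomotopic Z).comp_left f).comp_right g

namespace SuspI

variable {Ω β : Type*} [TopologicalSpace Ω] [TopologicalSpace β] {S : Ω → Ω}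

def lift (G : C(Ω × I, β)) (hG : ∀ ω, G (ω, 1) = G (S ω, 0)) : C(SuspI S, β) where
  toFun := Quot.lift G fun
    | (ω, t), (_, _), ⟨ht, ht', rfl⟩ => by
      rw [show t = 1 from Subtype.ext ht, hG, show (0 : I) = _ from Subtype.ext ht'.symm]
  continuous_toFun := continuous_quot_lift _ G.continuous

end SuspI

/-- if `h : X₀ → ℝ/ℤ` is continuous, vanishes on the fiber `Ω × {0}` and on the
circle `{0} × [0,1]`, and each fiber map `ω ↦ h([ω,t])` is nullhomotopic, then `h` is
nullhomotopic; equivalently, `h` admits a continuous lift `h̃ : X₀ → ℝ`. -/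
theorem stmt_18 {Ω : Type*} [TopologicalSpace Ω] [AddCommGroup Ω] [ConnectedSpace Ω]
    (A : Ω ≃+ Ω) (h : C(SuspI (fun ω => A ω), AddCircle (1:ℝ)))
    (h0 : ∀ ω : Ω, h (Quot.mk (suspRelI (fun ω => A ω)) (ω, ⟨0, by norm_num⟩)) = 0)
    (hS : ∀ t : Set.Icc (0:ℝ) 1, h (Quot.mk (suspRelI (fun ω => A ω)) (0, t)) = 0) :
    h.Nullhomotopic ∧
      ∃ H : C(SuspI (fun ω => A ω), ℝ), ∀ x, ((H x : ℝ) : AddCircle (1:ℝ)) = h x := by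
  let π : C(ℝ, AddCircle (1:ℝ)) := ⟨(↑), AddCircle.continuous_mk' 1⟩
  let H : C(I × Ω, AddCircle (1:ℝ)) :=
    h.comp ⟨fun x => Quot.mk _ x.swap, continuous_quot_mk.comp continuous_swap⟩
  have hπ0 : π 0 = 0 := AddCircle.coe_zero _
  have h1 : ∀ ω, H (1, ω) = π 0 := fun ω =>
    (congrArg h (Quot.sound ⟨rfl, rfl, rfl⟩)).trans ((h0 (A ω)).trans hπ0.symm)
  obtain ⟨G, hGπ, hGends⟩ := (AddCircle.isCoveringMap_coe (1:ℝ)).exists_homotopy_lift_const_ends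
    H (e := 0) (a₀ := 0) (fun ω => (h0 ω).trans hπ0.symm) h1 (fun t => (hS t).trans hπ0.symm)
  let L := SuspI.lift (S := fun ω => A ω) (G.comp ⟨Prod.swap, continuous_swap⟩)
    fun ω => by simp [hGends]
  have hL : π.comp L = h := ContinuousMap.ext <| Quot.ind fun x => congr_fun hGπ x.swap
  exact ⟨hL ▸ π.nullhomotopic_comp_of_contractibleSpace L, L, fun x => congr($hL x)⟩

end
end
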